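/- Let $R = k[x,y]$ be a polynomial ring in two variables over a field $k$, and let $J = (x^{a_1}y^{b_1}, \ldots, x^{a_r}y^{b_r})$ with $r > 1$, where $a_1 > a_2 > \cdots > a_r \ge 0$ and $0 \le b_1 < b_2 < \cdots < b_r$. Then $\omega(J) = \max_{1 \le i \le r-1}\{a_i + b_{i+1}\} - 1$. -/

import Mathlib

open Ideal Finset MvPolynomial

/-- `I` is an `N`-absorbing ideal: whenever a product of `N+1` elements lies in `I`,
the product of some `N` of them (omitting one factor) lies in `I`. -/
def IsNAbsorbing {R : Type*} [CommRing R] (I : Ideal R) (N : ℕ) : Prop :=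
  ∀ x : Fin (N + 1) → R, (∏ i, x i) ∈ I →
    ∃ j, (∏ i ∈ Finset.univ.erase j, x i) ∈ I

/-- `ω(I)`: the least `N` such that `I` is `N`-absorbing. -/
noncomputable def omegaAbs {R : Type*} [CommRing R] (I : Ideal R) : ℕ :=
  sInf {N | IsNAbsorbing I N}

/-!
Let `m` be the maximum of the `a i + b (i + 1)`, and let `α`, `β` be the least exponents of `x`
and of `y` among the generators, so that `α + β < m`.

Upper bound: take `m` factors whose product is in `J`. A factor with nonzero constant term can be
cancelled, `J` being a monomial ideal. Otherwise all factors lie in `𝔪 = (x, y)`. As `x` is prime,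
`x ^ α` already divides the product of at most `α` of the factors, and likewise `y ^ β` divides
the product of at most `β` of them. Some factor is used by neither, and the product of the others
lies in `(x ^ α) ∩ (y ^ β) ∩ 𝔪 ^ (m - 1) ⊆ J`.

Lower bound: for `i` attaining the maximum, `x ^ (a i - 1) * y ^ (b (i + 1) - 1)` is an outer
corner of the staircase: it is not in `J`, but its multiples by `x` and by `y` are. So its product
with `x + y`, split into `m - 1` factors, lies in `J`, while every product of `m - 2` of these
factors still has the corner among its monomials.
-/

theorem Fin.prod_univ_erase_eq_prod_succAbove {M : Type*} [CommMonoid M] {n : ℕ}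
    (x : Fin (n + 1) → M) (j : Fin (n + 1)) :
    ∏ i ∈ univ.erase j, x i = ∏ i : Fin n, x (j.succAbove i) := by
  rw [← compl_singleton, ← Fin.image_succAbove_univ, prod_image fun _ _ _ _ h ↦
    Fin.succAbove_right_injective h]

section Absorbing

variable {R : Type*} [CommRing R] {I : Ideal R}

theorem IsNAbsorbing.succ {n : ℕ} (h : IsNAbsorbing I n) : IsNAbsorbing I (n + 1) := by
  intro x hx
  simp only [Fin.prod_univ_erase_eq_prod_succAbove]
  obtain ⟨j, hj⟩ := h (Fin.cons (x 0 * x 1) fun i ↦ x i.succ.succ)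
    (by simpa [Fin.prod_univ_succ, mul_assoc] using hx)
  rw [Fin.prod_univ_erase_eq_prod_succAbove] at hj
  induction j using Fin.cases with
  | zero => exact ⟨1, by simpa [Fin.prod_univ_succ] using I.mul_mem_left (x 0) hj⟩
  | succ j =>
    cases n with
    | zero => exact j.elim0
    | succ n => exact ⟨j.succ.succ, by simpa [Fin.prod_univ_succ, mul_assoc] using hj⟩

theorem IsNAbsorbing.mono {n m : ℕ} (h : IsNAbsorbing I n) (hnm : n ≤ m) :
    IsNAbsorbing I m := by
  induction m, hnm using Nat.le_induction with
  | base => exact h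
  | succ m _ ih => exact ih.succ

theorem omegaAbs_eq_succ {n : ℕ} (h : IsNAbsorbing I (n + 1)) (h' : ¬ IsNAbsorbing I n) :
    omegaAbs I = n + 1 :=
  le_antisymm (Nat.sInf_le h) <| le_csInf ⟨_, h⟩ fun m hm ↦ by
    by_contra! hlt
    exact h' (hm.mono (by omega))

theorem IsNAbsorbing.mem_or_of_pow_mul_pow_mul_mem [IsDomain R] {p q : ℕ}
    (hI : IsNAbsorbing I (p + q)) {u v w : R} (hu : u ≠ 0) (hv : v ≠ 0) (hw : w ≠ 0)
    (h : u ^ p * v ^ q * w ∈ I) :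
    u ^ p * v ^ q ∈ I ∨ (∃ p', p = p' + 1 ∧ u ^ p' * v ^ q * w ∈ I) ∨
      ∃ q', q = q' + 1 ∧ u ^ p * v ^ q' * w ∈ I := by
  classical
  set x : Fin (p + q + 1) → R :=
    Fin.append (Fin.append (fun _ : Fin p ↦ u) fun _ : Fin q ↦ v) fun _ : Fin 1 ↦ w
  have hprod : ∏ i, x i = u ^ p * v ^ q * w := by simp [x, Fin.prod_univ_add]
  obtain ⟨j, hj⟩ := hI x (hprod ▸ h)
  have hcancel : x j * ∏ i ∈ univ.erase j, x i = u ^ p * v ^ q * w :=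
    (mul_prod_erase _ _ (mem_univ j)).trans hprod
  induction j using Fin.addCases with
  | left j =>
    induction j using Fin.addCases with
    | left i =>
      obtain ⟨p', rfl⟩ : ∃ p', p = p' + 1 := ⟨p - 1, by have := i.pos; omega⟩
      refine Or.inr (Or.inl ⟨p', rfl, ?_⟩)
      rw [show x _ = u by simp [x]] at hcancel
      rwa [mul_left_cancel₀ hu (hcancel.trans (by ring : _ = u * (u ^ p' * v ^ q * w)))] at hj
    | right i =>
      obtain ⟨q', rfl⟩ : ∃ q', q = q' + 1 := ⟨q - 1, by have := i.pos; omega⟩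
      refine Or.inr (Or.inr ⟨q', rfl, ?_⟩)
      rw [show x _ = v by simp [x]] at hcancel
      rwa [mul_left_cancel₀ hv (hcancel.trans (by ring : _ = v * (u ^ p * v ^ q' * w)))] at hj
  | right j =>
    refine Or.inl ?_
    rw [show x _ = w by simp [x]] at hcancel
    rwa [mul_left_cancel₀ hw (hcancel.trans (mul_comm _ w))] at hj

end Absorbing

theorem Prime.exists_card_le_pow_dvd_prod {M ι : Type*} [CommMonoidWithZero M]
    [IsCancelMulZero M] {p : M} (hp : Prime p) {s : Finset ι} {f : ι → M} {n : ℕ}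
    (h : p ^ n ∣ ∏ t ∈ s, f t) : ∃ T ⊆ s, #T ≤ n ∧ p ^ n ∣ ∏ t ∈ T, f t := by
  classical
  induction n with
  | zero => exact ⟨∅, empty_subset s, by simp, by simp⟩
  | succ n ih =>
    obtain ⟨T, hTs, hcard, g, hg⟩ := ih ((pow_dvd_pow p n.le_succ).trans h)
    rw [← prod_sdiff hTs, hg, mul_left_comm, pow_succ,
      mul_dvd_mul_iff_left (pow_ne_zero n hp.ne_zero)] at h
    rcases hp.dvd_or_dvd h with hrest | hpg
    · obtain ⟨t, ht, hpt⟩ := (hp.dvd_finsetProd_iff _).mp hrest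
      rw [mem_sdiff] at ht
      refine ⟨insert t T, insert_subset ht.1 hTs, (card_insert_le t T).trans (by omega), ?_⟩
      rw [prod_insert ht.2, hg, pow_succ']
      exact mul_dvd_mul hpt (dvd_mul_right _ _)
    · refine ⟨T, hTs, hcard.trans n.le_succ, ?_⟩
      rw [hg, pow_succ]
      exact mul_dvd_mul_left _ hpg

theorem exists_le_and_le_of_forall_castSucc_le_or_succ_le {n p q : ℕ} (a b : Fin (n + 1) → ℕ)
    (ha : a (Fin.last n) ≤ p) (hb : b 0 ≤ q) (h : ∀ i : Fin n, a i.castSucc ≤ p ∨ b i.succ ≤ q) :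
    ∃ j, a j ≤ p ∧ b j ≤ q := by
  induction n with
  | zero => exact ⟨0, ha, hb⟩
  | succ n ih =>
    rcases h 0 with h0 | h1
    · exact ⟨0, h0, hb⟩
    · obtain ⟨j, hj⟩ := ih (a ∘ Fin.succ) (b ∘ Fin.succ)
        (by rwa [Function.comp_apply, Fin.succ_last]) h1
        fun i ↦ by simpa only [Function.comp_apply, Fin.succ_castSucc] using h i.succ
      exact ⟨j.succ, hj⟩

theorem not_lt_and_lt_of_strictAnti_of_strictMono {n : ℕ} {a b : Fin (n + 1) → ℕ}
    (ha : StrictAnti a) (hb : StrictMono b) (i : Fin n) (l : Fin (n + 1)) :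
    ¬ (a l < a i.castSucc ∧ b l < b i.succ) := fun ⟨hal, hbl⟩ ↦
  (Fin.castSucc_lt_iff_succ_le.mp (ha.lt_iff_gt.mp hal)).not_gt (hb.lt_iff_lt.mp hbl)

namespace MvPolynomial

section MonomialIdeal

variable {σ R : Type*} [CommSemiring R]

theorem mem_of_mul_mem_of_constantCoeff_ne_zero [NoZeroDivisors R] {S : Set (σ →₀ ℕ)}
    {f g : MvPolynomial σ R} (h : f * g ∈ span ((fun s ↦ monomial s (1 : R)) '' S))
    (hg : constantCoeff g ≠ 0) : f ∈ span ((fun s ↦ monomial s (1 : R)) '' S) := by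
  classical
  rw [mem_ideal_span_monomial_image] at h ⊢
  by_contra! hbad
  -- a monomial of `f` outside the ideal, of least total degree, survives in `f * g`
  obtain ⟨s, hs, hmin⟩ := exists_min_image (f.support.filter fun s ↦ ∀ si ∈ S, ¬ si ≤ s)
    Finsupp.degree (by simpa [Finset.Nonempty] using hbad)
  rw [mem_filter] at hs
  suffices s ∈ (f * g).support by
    obtain ⟨si, hsi, hle⟩ := h s this
    exact hs.2 si hsi hle
  rw [mem_support_iff, coeff_mul, sum_eq_single (s, 0)]
  · exact mul_ne_zero (mem_support_iff.mp hs.1) (by simpa [constantCoeff_eq] using hg)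
  · rintro ⟨u, v⟩ huv hne
    rw [HasAntidiagonal.mem_antidiagonal] at huv
    dsimp only at huv
    by_contra hterm
    have hu : u ∈ f.support := mem_support_iff.mpr (left_ne_zero_of_mul hterm)
    have hv : Finsupp.degree v ≠ 0 := by
      rw [Ne, Finsupp.degree_eq_zero_iff]
      rintro rfl
      exact hne (by simp_all)
    have := hmin u <| mem_filter.mpr
      ⟨hu, fun si hsi hle ↦ hs.2 si hsi (hle.trans (huv ▸ le_self_add))⟩
    rw [← huv, map_add] at this
    omega
  · simp

theorem mem_idealOfVars_of_constantCoeff_eq_zero {f : MvPolynomial σ R}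
    (h : constantCoeff f = 0) : f ∈ idealOfVars σ R := by
  rw [← pow_one (idealOfVars σ R), mem_pow_idealOfVars_iff]
  intro s hs
  rw [Nat.one_le_iff_ne_zero, Ne, Finsupp.degree_eq_zero_iff]
  rintro rfl
  exact mem_support_iff.mp hs (by rwa [← constantCoeff_eq])

theorem X_pow_mul_X_pow_eq_monomial (i j : σ) (p q : ℕ) :
    (X i ^ p * X j ^ q : MvPolynomial σ R) =
      monomial (Finsupp.single i p + Finsupp.single j q) 1 := by
  rw [X_pow_eq_monomial, X_pow_eq_monomial, monomial_mul, one_mul]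

theorem le_of_X_pow_dvd {i : σ} {n : ℕ} {f : MvPolynomial σ R} (h : X i ^ n ∣ f)
    {s : σ →₀ ℕ} (hs : s ∈ f.support) : n ≤ s i := by
  rw [← Ideal.mem_span_singleton, X_pow_eq_monomial,
    ← Set.image_singleton (f := fun s ↦ monomial s (1 : R)), mem_ideal_span_monomial_image] at h
  obtain ⟨_, rfl, hle⟩ := h s hs
  simpa using hle i

theorem X_pow_dvd_of_mem_span_monomial_image [Nontrivial R] {S : Set (σ →₀ ℕ)} {i : σ}
    {n : ℕ} (hS : ∀ s ∈ S, n ≤ s i) {f : MvPolynomial σ R}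
    (hf : f ∈ span ((fun s ↦ monomial s (1 : R)) '' S)) : X i ^ n ∣ f := by
  rw [← Ideal.mem_span_singleton]
  refine Ideal.span_le.mpr ?_ hf
  rintro _ ⟨s, hs, rfl⟩
  rw [SetLike.mem_coe, Ideal.mem_span_singleton, X_pow_eq_monomial,
    monomial_one_dvd_monomial_one, Finsupp.single_le_iff]
  exact hS s hs

theorem isNAbsorbing_span_monomial_image {R : Type*} [CommRing R] [IsDomain R]
    {S : Set (σ →₀ ℕ)} {p q : MvPolynomial σ R} (hp : Prime p) (hq : Prime q) {A B N : ℕ}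
    (hN : A + B ≤ N)
    (hpS : ∀ f ∈ span ((fun s ↦ monomial s (1 : R)) '' S), p ^ A ∣ f)
    (hqS : ∀ f ∈ span ((fun s ↦ monomial s (1 : R)) '' S), q ^ B ∣ f)
    (hS : ∀ f ∈ idealOfVars σ R ^ N, p ^ A ∣ f → q ^ B ∣ f →
      f ∈ span ((fun s ↦ monomial s (1 : R)) '' S)) :
    IsNAbsorbing (span ((fun s ↦ monomial s (1 : R)) '' S)) N := by
  intro x hx
  by_cases hc : ∃ t, constantCoeff (x t) ≠ 0
  · obtain ⟨t, ht⟩ := hc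
    exact ⟨t, mem_of_mul_mem_of_constantCoeff_ne_zero
      (by rwa [prod_erase_mul _ _ (mem_univ t)]) ht⟩
  simp only [not_exists, not_not] at hc
  obtain ⟨T, -, hT, hpT⟩ := hp.exists_card_le_pow_dvd_prod (hpS _ hx)
  obtain ⟨T', -, hT', hqT'⟩ := hq.exists_card_le_pow_dvd_prod (hqS _ hx)
  obtain ⟨j, -, hj⟩ := exists_mem_notMem_of_card_lt_card (s := T ∪ T') (t := univ)
    (by have := card_union_le T T'; simp only [card_univ, Fintype.card_fin]; omega)
  have hsub : T ∪ T' ⊆ univ.erase j := fun t ht ↦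
    mem_erase.mpr ⟨fun h ↦ hj (h ▸ ht), mem_univ t⟩
  refine ⟨j, hS _ ?_ (hpT.trans (prod_dvd_prod_of_subset _ _ _ (subset_union_left.trans hsub)))
    (hqT'.trans (prod_dvd_prod_of_subset _ _ _ (subset_union_right.trans hsub)))⟩
  have := Ideal.prod_mem_prod fun t (_ : t ∈ univ.erase j) ↦
    mem_idealOfVars_of_constantCoeff_eq_zero (hc t)
  rwa [prod_const, card_erase_of_mem (mem_univ j), card_univ, Fintype.card_fin,
    Nat.add_sub_cancel] at this

end MonomialIdeal

section Staircase

variable {R ι : Type*} [CommSemiring R] (a b : ι → ℕ)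

theorem span_range_X_pow_mul_X_pow :
    span (Set.range fun l ↦ (X 0 ^ a l * X 1 ^ b l : MvPolynomial (Fin 2) R)) =
      span ((fun s ↦ monomial s (1 : R)) ''
        Set.range fun l ↦ Finsupp.single 0 (a l) + Finsupp.single 1 (b l)) := by
  simp only [← Set.range_comp, Function.comp_def, X_pow_mul_X_pow_eq_monomial]

theorem mem_span_range_X_pow_mul_X_pow_iff {f : MvPolynomial (Fin 2) R} :
    f ∈ span (Set.range fun l ↦ (X 0 ^ a l * X 1 ^ b l : MvPolynomial (Fin 2) R)) ↔
      ∀ s ∈ f.support, ∃ l, a l ≤ s 0 ∧ b l ≤ s 1 := by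
  simp [span_range_X_pow_mul_X_pow, mem_ideal_span_monomial_image, Finsupp.le_def,
    Fin.forall_fin_two]

theorem X_pow_mul_X_pow_mem_span_range_iff [Nontrivial R] {p q : ℕ} :
    (X 0 ^ p * X 1 ^ q : MvPolynomial (Fin 2) R) ∈
        span (Set.range fun l ↦ (X 0 ^ a l * X 1 ^ b l : MvPolynomial (Fin 2) R)) ↔
      ∃ l, a l ≤ p ∧ b l ≤ q := by
  classical
  rw [mem_span_range_X_pow_mul_X_pow_iff, X_pow_mul_X_pow_eq_monomial, support_monomial,
    if_neg one_ne_zero]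
  simp

theorem X_pow_mul_X_pow_mul_add_mem_span_range_iff [Nontrivial R] {p q : ℕ} :
    (X 0 ^ p * X 1 ^ q * (X 0 + X 1) : MvPolynomial (Fin 2) R) ∈
        span (Set.range fun l ↦ (X 0 ^ a l * X 1 ^ b l : MvPolynomial (Fin 2) R)) ↔
      (∃ l, a l ≤ p + 1 ∧ b l ≤ q) ∧ ∃ l, a l ≤ p ∧ b l ≤ q + 1 := by
  classical
  have hsum : (X 0 ^ p * X 1 ^ q * (X 0 + X 1) : MvPolynomial (Fin 2) R) =
      X 0 ^ (p + 1) * X 1 ^ q + X 0 ^ p * X 1 ^ (q + 1) := by ring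
  refine ⟨fun h ↦ ?_, fun ⟨h1, h2⟩ ↦ hsum ▸ add_mem
    ((X_pow_mul_X_pow_mem_span_range_iff a b).mpr h1)
    ((X_pow_mul_X_pow_mem_span_range_iff a b).mpr h2)⟩
  rw [mem_span_range_X_pow_mul_X_pow_iff, hsum, X_pow_mul_X_pow_eq_monomial,
    X_pow_mul_X_pow_eq_monomial] at h
  have hne : Finsupp.single (0 : Fin 2) (p + 1) + Finsupp.single 1 q ≠
      Finsupp.single 0 p + Finsupp.single 1 (q + 1) := fun h ↦ by
    simpa using DFunLike.congr_fun h 0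
  constructor
  · have := h (Finsupp.single 0 (p + 1) + Finsupp.single 1 q) (by
      rw [mem_support_iff, coeff_add, coeff_monomial, coeff_monomial, if_pos rfl,
        if_neg hne.symm, add_zero]
      exact one_ne_zero)
    simpa using this
  · have := h (Finsupp.single 0 p + Finsupp.single 1 (q + 1)) (by
      rw [mem_support_iff, coeff_add, coeff_monomial, coeff_monomial, if_neg hne, if_pos rfl,
        zero_add]
      exact one_ne_zero)
    simpa using this

end Staircase

variable {R : Type*} [CommRing R] [IsDomain R] {r : ℕ} {a b : Fin (r + 2) → ℕ}

theorem isNAbsorbing_span_range_X_pow_mul_X_pow (ha : StrictAnti a) (hb : StrictMono b)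
    {N : ℕ} (hN : ∀ i : Fin (r + 1), a i.castSucc + b i.succ ≤ N + 1) :
    IsNAbsorbing (span (Set.range fun l ↦ (X 0 ^ a l * X 1 ^ b l : MvPolynomial (Fin 2) R)))
      N := by
  rw [span_range_X_pow_mul_X_pow]
  refine isNAbsorbing_span_monomial_image (X_prime (i := 0)) (X_prime (i := 1))
    (A := a (Fin.last _)) (B := b 0) ?_ ?_ ?_ ?_
  · have := hN (Fin.last r)
    have := ha (Fin.castSucc_lt_last (Fin.last r))
    have := hb (Fin.succ_pos (Fin.last r))
    simp only [Fin.succ_last] at *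
    omega
  · refine fun f ↦ X_pow_dvd_of_mem_span_monomial_image ?_
    rintro _ ⟨l, rfl⟩
    simpa using ha.antitone (Fin.le_last l)
  · refine fun f ↦ X_pow_dvd_of_mem_span_monomial_image ?_
    rintro _ ⟨l, rfl⟩
    simpa using hb.monotone (Fin.zero_le l)
  · intro f hf hA hB
    rw [← span_range_X_pow_mul_X_pow, mem_span_range_X_pow_mul_X_pow_iff]
    intro s hs
    have hdeg := (mem_pow_idealOfVars_iff _ _).mp hf s hs
    rw [Finsupp.degree_eq_sum, Fin.sum_univ_two] at hdeg
    refine exists_le_and_le_of_forall_castSucc_le_or_succ_le a b (le_of_X_pow_dvd hA hs)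
      (le_of_X_pow_dvd hB hs) fun i ↦ ?_
    have := hN i
    omega

theorem not_isNAbsorbing_span_range_X_pow_mul_X_pow (ha : StrictAnti a) (hb : StrictMono b)
    (i : Fin (r + 1)) :
    ¬ IsNAbsorbing (span (Set.range fun l ↦ (X 0 ^ a l * X 1 ^ b l : MvPolynomial (Fin 2) R)))
      (a i.castSucc + b i.succ - 2) := by
  have ha' := ha (Fin.castSucc_lt_succ (i := i))
  have hb' := hb (Fin.castSucc_lt_succ (i := i))
  obtain ⟨A, hA⟩ : ∃ A, a i.castSucc = A + 1 := ⟨a i.castSucc - 1, by omega⟩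
  obtain ⟨B, hB⟩ : ∃ B, b i.succ = B + 1 := ⟨b i.succ - 1, by omega⟩
  rw [hA, hB, show A + 1 + (B + 1) - 2 = A + B by omega]
  intro habs
  have hcorner : ¬ ∃ l, a l ≤ A ∧ b l ≤ B := fun ⟨l, hl⟩ ↦
    not_lt_and_lt_of_strictAnti_of_strictMono ha hb i l ⟨by omega, by omega⟩
  have hX : (X 0 + X 1 : MvPolynomial (Fin 2) R) ≠ 0 := fun h ↦
    zero_ne_one (X_dvd_X.mp ⟨-1, by linear_combination h⟩ : (0 : Fin 2) = 1)
  have hmem := (X_pow_mul_X_pow_mul_add_mem_span_range_iff (R := R) a b (p := A) (q := B)).mpr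
    ⟨⟨i.castSucc, by omega, by omega⟩, ⟨i.succ, by omega, by omega⟩⟩
  rcases habs.mem_or_of_pow_mul_pow_mul_mem (X_ne_zero _) (X_ne_zero _) hX hmem with
    h | ⟨A', rfl, h⟩ | ⟨B', rfl, h⟩
  · exact hcorner ((X_pow_mul_X_pow_mem_span_range_iff a b).mp h)
  · exact hcorner ((X_pow_mul_X_pow_mul_add_mem_span_range_iff a b).mp h).1
  · exact hcorner ((X_pow_mul_X_pow_mul_add_mem_span_range_iff a b).mp h).2

end MvPolynomial

theorem omega_monomial_ideal_two_vars {k : Type*} [Field k] (r : ℕ)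
    (a b : Fin (r + 2) → ℕ) (ha : StrictAnti a) (hb : StrictMono b)
    (J : Ideal (MvPolynomial (Fin 2) k))
    (hJ : J = Ideal.span (Set.range fun i =>
      (X 0 : MvPolynomial (Fin 2) k) ^ a i * (X 1 : MvPolynomial (Fin 2) k) ^ b i)) :
    omegaAbs J = (Finset.univ.sup fun i : Fin (r + 1) => a i.castSucc + b i.succ) - 1 := by
  obtain ⟨i, -, hi⟩ := exists_mem_eq_sup univ univ_nonempty
    fun i : Fin (r + 1) ↦ a i.castSucc + b i.succ
  have hle : ∀ l : Fin (r + 1), a l.castSucc + b l.succ ≤ a i.castSucc + b i.succ :=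
    fun l ↦ hi ▸ le_sup (f := fun i : Fin (r + 1) ↦ a i.castSucc + b i.succ) (mem_univ l)
  have := ha (Fin.castSucc_lt_succ (i := i))
  have := hb (Fin.castSucc_lt_succ (i := i))
  rw [hi, hJ, show a i.castSucc + b i.succ - 1 = a i.castSucc + b i.succ - 2 + 1 by omega]
  exact omegaAbs_eq_succ
    (isNAbsorbing_span_range_X_pow_mul_X_pow ha hb fun l ↦ by have := hle l; omega)
    (not_isNAbsorbing_span_range_X_pow_mul_X_pow ha hb i)
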